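/- arXiv:1106.3774 — 2 statements merged into one kernel-verified Lean document; each statement's English description precedes it below -/
import Mathlib

section
/- Let n ≥ 1, k ∈ {1,…,n}, let 1 = c_1 < c_2 < ⋯ < c_k ≤ n and o_1, …, o_k ≥ 1 with o_1 + ⋯ + o_k = n and c_i ≤ o_1 + ⋯ + o_{i−1} + 1 for 2 ≤ i ≤ k. Then the number of parking functions of length n whose multiset of entries consists of c_i with multiplicity o_i for each i ∈ [k] equals the multinomial coefficient n!/(o_1!⋯o_k!), and this also equals the number of pairs (w, A) where w is a permutation of [n] and A is an antichain of Q_w that is the arc set of a nonnesting partition of [n] with exactly k blocks whose block minima are c_1, …, c_k and whose block with minimum c_i has cardinality o_i for each i. -/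
/-- `a : Fin n → ℕ` is a parking function of length `n`. -/
def IsParkingFunction (n : ℕ) (a : Fin n → ℕ) : Prop :=
  (∀ i, a i ∈ Finset.Icc 1 n) ∧
    ∃ g : Equiv.Perm (Fin n), Monotone (fun i => a (g i)) ∧ ∀ i : Fin n, a (g i) ≤ (i : ℕ) + 1

/-- `i` and `j` lie in the same block of the set partition `π` of `[n]`. -/
def SameBlock {n : ℕ} (π : Finpartition (Finset.univ : Finset (Fin n)))
    (i j : Fin n) : Prop :=
  ∃ B ∈ π.parts, i ∈ B ∧ j ∈ B

/-- `(i,j)` is an arc of the set partition `π`. -/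
def IsArc {n : ℕ} (π : Finpartition (Finset.univ : Finset (Fin n)))
    (i j : Fin n) : Prop :=
  i < j ∧ SameBlock π i j ∧ ∀ k : Fin n, SameBlock π i k → ¬(i < k ∧ k < j)

/-- The set partition `π` is nonnesting. -/
def IsNonnesting {n : ℕ} (π : Finpartition (Finset.univ : Finset (Fin n))) : Prop :=
  ∀ i j r s : Fin n, IsArc π i j → IsArc π r s → r ≤ i → j ≤ s → i = r ∧ j = s

/-- The partial order of the poset `Q_w`: `(i,j) ≤ (r,s)` iff `r ≤ i` and `j ≤ s`. -/
def QwLe {n : ℕ} (p q : Fin n × Fin n) : Prop :=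
  q.1 ≤ p.1 ∧ p.2 ≤ q.2

/-- `A` is an antichain of the poset `Q_w = {(i,j) : i < j, w(i) < w(j)}`. -/
def IsAntichainQw (n : ℕ) (w : Equiv.Perm (Fin n)) (A : Set (Fin n × Fin n)) : Prop :=
  (∀ p ∈ A, p.1 < p.2 ∧ w p.1 < w p.2) ∧
    ∀ p ∈ A, ∀ q ∈ A, p ≠ q → ¬QwLe p q ∧ ¬QwLe q p

/-! Every word with letter multiplicities `oᵢ` on the letters `cᵢ` is already a parking function:
after sorting, the first copy of `cᵢ` sits at position `o₁ + ⋯ + o_{i-1} + 1 ≥ cᵢ`. So the parking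
functions in question are counted by the multinomial coefficient, which counts words by
orbit–stabilizer for the action of the permutations of the positions.

On the other side, exactly one nonnesting partition has block minima `cᵢ` and block sizes `oᵢ`.
Scanning `1, …, n`, a position that is not a prescribed minimum must join the unfinished block
whose current last element comes first, since any other choice creates a nesting; the hypothesis
`cᵢ ≤ o₁ + ⋯ + o_{i-1} + 1` guarantees that some block is unfinished. The arcs of this partition
form an antichain of `Q_w` exactly when `w` increases along every block, and such `w` correspond
to words with multiplicities `oᵢ` via `w ↦ (block of ·) ∘ w⁻¹`. -/

open Finset
open scoped Nat

section FiberCounting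

variable {α ι : Type*} [Fintype α] [DecidableEq α] [Fintype ι] [DecidableEq ι]

theorem card_fiberCards_eq_mul_prod_factorial (f₀ : α → ι) :
    Nat.card {f : α → ι // ∀ i, Fintype.card {a // f a = i} = Fintype.card {a // f₀ a = i}} *
      ∏ i, (Fintype.card {a // f₀ a = i})! = (Fintype.card α)! := by
  set S := {f : α → ι // ∀ i, Fintype.card {a // f a = i} = Fintype.card {a // f₀ a = i}}
  let comp : Equiv.Perm α → S := fun g =>
    ⟨f₀ ∘ g, fun i => Fintype.card_congr (g.subtypeEquiv fun _ => Iff.rfl)⟩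
  -- `comp` is onto and its fibers are cosets of the stabilizer of `f₀`
  have hfiber : ∀ F : S, Nat.card {g // comp g = F} = ∏ i, (Fintype.card {a // f₀ a = i})! := by
    intro F
    let g₁ : Equiv.Perm α := Equiv.ofFiberEquiv fun i => Fintype.equivOfCardEq (F.2 i)
    have hg₁ : f₀ ∘ g₁ = F.1 := funext (Equiv.ofFiberEquiv_map _)
    rw [← DomMulAct.stabilizer_card, ← Nat.card_eq_fintype_card]
    refine Nat.card_congr (Equiv.subtypeEquiv (Equiv.mulRight g₁⁻¹) fun g => ?_)
    rw [Subtype.ext_iff, ← hg₁]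
    change f₀ ∘ g = f₀ ∘ g₁ ↔ f₀ ∘ (g * g₁⁻¹) = f₀
    constructor
    · intro h
      ext a
      simpa using congrFun h (g₁⁻¹ a)
    · intro h
      ext a
      simpa using congrFun h (g₁ a)
  rw [← Fintype.card_perm, ← Nat.card_eq_fintype_card,
    Nat.card_congr (Equiv.sigmaFiberEquiv comp).symm, Nat.card_sigma]
  simp only [hfiber, sum_const, card_univ, smul_eq_mul, Nat.card_eq_fintype_card]

theorem card_fiberCards_eq_multinomial (o : ι → ℕ) (h : ∑ i, o i = Fintype.card α) :
    Nat.card {f : α → ι // ∀ i, Fintype.card {a // f a = i} = o i} = Nat.multinomial univ o := by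
  let e : α ≃ Σ i, Fin (o i) := Fintype.equivOfCardEq (by simp [h])
  have he : ∀ i, Fintype.card {a // (e a).1 = i} = o i := fun i => by
    rw [Fintype.card_congr ((e.subtypeEquiv fun _ => Iff.rfl).trans (Equiv.sigmaSubtype i)),
      Fintype.card_fin]
  have key := card_fiberCards_eq_mul_prod_factorial fun a => (e a).1
  simp only [he] at key
  rw [← h, ← Nat.multinomial_spec, mul_comm] at key
  exact Nat.eq_of_mul_eq_mul_left (by positivity) key

end FiberCounting

section StrictMonoOnFibers

variable {α ι : Type*} [LinearOrder α]

def StrictMonoOnFibers (ℓ : α → ι) (w : Equiv.Perm α) : Prop :=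
  ∀ x y, ℓ x = ℓ y → x < y → w x < w y

noncomputable def StrictMonoOnFibers.fiberOrderIso {ℓ : α → ι} {w : Equiv.Perm α}
    (hw : StrictMonoOnFibers ℓ w) {f : α → ι} (hf : ∀ a, f (w a) = ℓ a) (i : ι) :
    {a // ℓ a = i} ≃o {a // f a = i} :=
  StrictMono.orderIsoOfSurjective (fun a => ⟨w a, (hf a).trans a.2⟩)
    (fun a b hab => hw a b (a.2.trans b.2.symm) hab)
    (fun b => ⟨⟨w.symm b, by rw [← hf, w.apply_symm_apply]; exact b.2⟩, by simp⟩)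

variable [Fintype α]

theorem StrictMonoOnFibers.comp_symm_injective (ℓ : α → ι) :
    Function.Injective fun w : {w // StrictMonoOnFibers ℓ w} => ℓ ∘ w.1.symm := by
  rintro ⟨w, hw⟩ ⟨w', hw'⟩ h
  ext x
  have hf : ∀ a, (ℓ ∘ w.symm) (w a) = ℓ a := by simp
  have h : ℓ ∘ w.symm = ℓ ∘ w'.symm := h
  have hf' : ∀ a, (ℓ ∘ w.symm) (w' a) = ℓ a := fun a => by rw [h]; simp
  -- both restrict to order isomorphisms between the same two fibers, and there is only one
  have := Subsingleton.elim (hw.fiberOrderIso hf (ℓ x)) (hw'.fiberOrderIso hf' (ℓ x))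
  exact congrArg Subtype.val (DFunLike.congr_fun this ⟨x, rfl⟩)

variable [DecidableEq ι]

theorem StrictMonoOnFibers.exists_comp_symm_eq (ℓ f : α → ι)
    (hf : ∀ i, Fintype.card {a // f a = i} = Fintype.card {a // ℓ a = i}) :
    ∃ w, StrictMonoOnFibers ℓ w ∧ ℓ ∘ w.symm = f := by
  let e : ∀ i, {a // ℓ a = i} ≃o {a // f a = i} := fun i =>
    (Fintype.orderIsoFinOfCardEq _ rfl).symm.trans (Fintype.orderIsoFinOfCardEq _ (hf i))
  let w : Equiv.Perm α := Equiv.ofFiberEquiv fun i => (e i).toEquiv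
  have hw : ∀ a, f (w a) = ℓ a := Equiv.ofFiberEquiv_map _
  refine ⟨w, fun x y hxy hlt => ?_, funext fun b => by simpa using (hw (w.symm b)).symm⟩
  have hwe : ∀ a i (h : ℓ a = i), w a = e i ⟨a, h⟩ := by rintro a _ rfl; rfl
  rw [hwe x _ rfl, hwe y _ hxy.symm]
  exact (e _).strictMono hlt

noncomputable def strictMonoOnFibersEquiv (ℓ : α → ι) :
    {w // StrictMonoOnFibers ℓ w} ≃
      {f : α → ι // ∀ i, Fintype.card {a // f a = i} = Fintype.card {a // ℓ a = i}} :=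
  Equiv.ofBijective
    (fun w => ⟨ℓ ∘ w.1.symm, fun _ => Fintype.card_congr (w.1.subtypeEquiv fun _ => by simp).symm⟩)
    ⟨fun _ _ h => StrictMonoOnFibers.comp_symm_injective ℓ (congrArg Subtype.val h), fun f => by
      obtain ⟨w, hw, hwf⟩ := StrictMonoOnFibers.exists_comp_symm_eq ℓ f.1 f.2
      exact ⟨⟨w, hw⟩, Subtype.ext hwf⟩⟩

end StrictMonoOnFibers

theorem map_univ_eq_sum_replicate_iff {α ι : Type*} [Fintype α] [Fintype ι] [DecidableEq ι]
    (f : α → ι) (o : ι → ℕ) :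
    univ.val.map f = ∑ i, Multiset.replicate (o i) i ↔
      ∀ i, Fintype.card {a // f a = i} = o i := by
  rw [Multiset.ext]
  refine forall_congr' fun i => ?_
  rw [Multiset.count_sum', sum_eq_single i (fun j _ hji => by simp [Multiset.count_replicate, hji])
    (by simp), Multiset.count_replicate_self, Multiset.count_map, Fintype.card_subtype, card_def,
    filter_val]
  simp only [eq_comm]

theorem exists_eq_of_map_univ_eq_map {α ι β : Type*} [Fintype α] {c : ι → β} {N : Multiset ι}
    {a : α → β} (ha : univ.val.map a = N.map c) (x : α) : ∃ i, c i = a x := by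
  obtain ⟨i, -, hi⟩ := Multiset.mem_map.mp (ha ▸ Multiset.mem_map_of_mem a (mem_univ_val x))
  exact ⟨i, hi⟩

noncomputable def mapUnivEquiv {α ι β : Type*} [Fintype α] [Nonempty ι] {c : ι → β}
    (hc : Function.Injective c) (N : Multiset ι) :
    {f : α → ι // univ.val.map f = N} ≃ {a : α → β // univ.val.map a = N.map c} where
  toFun f := ⟨c ∘ f.1, by rw [← Multiset.map_map, f.2]⟩
  invFun a := ⟨Function.invFun c ∘ a.1, Multiset.map_injective hc <| (Multiset.map_map _ _ _).trans
    ((Multiset.map_congr rfl fun x _ =>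
      Function.invFun_eq (exists_eq_of_map_univ_eq_map a.2 x)).trans a.2)⟩
  left_inv f := Subtype.ext (funext fun x => Function.leftInverse_invFun hc (f.1 x))
  right_inv a :=
    Subtype.ext (funext fun x => Function.invFun_eq (exists_eq_of_map_univ_eq_map a.2 x))

theorem map_sum_replicate {ι β : Type*} [Fintype ι] (c : ι → β) (o : ι → ℕ) :
    (∑ i, Multiset.replicate (o i) i).map c = ∑ i, Multiset.replicate (o i) (c i) := by
  rw [← Multiset.coe_mapAddMonoidHom, map_sum]
  simp [Multiset.map_replicate]

noncomputable def fiberCardsEquiv {α ι β : Type*} [Fintype α] [Fintype ι] [DecidableEq ι]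
    [Nonempty ι] {c : ι → β} (hc : Function.Injective c) (o : ι → ℕ) :
    {f : α → ι // ∀ i, Fintype.card {a // f a = i} = o i} ≃
      {a : α → β // univ.val.map a = ∑ i, Multiset.replicate (o i) (c i)} :=
  (Equiv.subtypeEquivRight fun f => (map_univ_eq_sum_replicate_iff f o).symm).trans
    ((mapUnivEquiv hc _).trans (Equiv.subtypeEquivRight fun a => by rw [map_sum_replicate]))

section Partitions

variable {n : ℕ} {π : Finpartition (univ : Finset (Fin n))}

theorem sameBlock_iff_mem_part {x y : Fin n} : SameBlock π x y ↔ y ∈ π.part x := by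
  rw [Finpartition.mem_part_iff_exists]
  exact ⟨fun ⟨B, hB, hx, hy⟩ => ⟨B, hB, hy, hx⟩, fun ⟨B, hB, hy, hx⟩ => ⟨B, hB, hx, hy⟩⟩

theorem SameBlock.symm {x y : Fin n} (h : SameBlock π x y) : SameBlock π y x :=
  let ⟨B, hB, hx, hy⟩ := h
  ⟨B, hB, hy, hx⟩

theorem SameBlock.trans {x y z : Fin n} (hxy : SameBlock π x y) (hyz : SameBlock π y z) :
    SameBlock π x z := by
  obtain ⟨B, hB, hx, hy⟩ := hxy
  obtain ⟨C, hC, hy', hz⟩ := hyz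
  exact ⟨B, hB, hx, π.eq_of_mem_parts hC hB hy' hy ▸ hz⟩

theorem parts_eq_image_part : π.parts = univ.image π.part := by
  ext B
  refine ⟨fun hB => ?_, fun hB => ?_⟩
  · obtain ⟨x, hx⟩ := π.nonempty_of_mem_parts hB
    exact mem_image.mpr ⟨x, mem_univ x, π.part_eq_of_mem hB hx⟩
  · obtain ⟨x, -, rfl⟩ := mem_image.mp hB
    exact π.part_mem.mpr (mem_univ x)

theorem eq_of_sameBlock_iff {π' : Finpartition (univ : Finset (Fin n))}
    (h : ∀ x y, SameBlock π x y ↔ SameBlock π' x y) : π = π' := by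
  refine Finpartition.ext ?_
  rw [parts_eq_image_part, parts_eq_image_part]
  congr 1
  ext x y
  rw [← sameBlock_iff_mem_part, ← sameBlock_iff_mem_part, h]

theorem sameBlock_ofSetoid_ker {ι : Type*} (ℓ : Fin n → ι) [DecidableRel (Setoid.ker ℓ).r]
    {x y : Fin n} : SameBlock (Finpartition.ofSetoid (Setoid.ker ℓ)) x y ↔ ℓ x = ℓ y := by
  rw [sameBlock_iff_mem_part, Finpartition.mem_part_ofSetoid_iff_rel, Setoid.ker_def]

theorem lt_of_sameBlock_of_forall_isArc {w : Equiv.Perm (Fin n)}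
    (hw : ∀ x y, IsArc π x y → w x < w y) {x y : Fin n} (hxy : SameBlock π x y) (hlt : x < y) :
    w x < w y := by
  induction h : (y : ℕ) - x using Nat.strong_induction_on generalizing x y with
  | _ d ih =>
    by_cases harc : IsArc π x y
    · exact hw x y harc
    · obtain ⟨z, hxz, hz⟩ : ∃ z, SameBlock π x z ∧ x < z ∧ z < y := by
        simpa [IsArc, hlt, hxy] using harc
      exact (ih _ (by omega) hxz hz.1 rfl).trans (ih _ (by omega) (hxz.symm.trans hxy) hz.2 rfl)

theorem isAntichainQw_arcs_iff (hπ : IsNonnesting π) (w : Equiv.Perm (Fin n)) :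
    IsAntichainQw n w {q | IsArc π q.1 q.2} ↔ ∀ x y, IsArc π x y → w x < w y := by
  refine ⟨fun h x y hxy => (h.1 (x, y) hxy).2, fun hw => ⟨fun q hq => ⟨hq.1, hw _ _ hq⟩, ?_⟩⟩
  intro p hp q hq hpq
  refine ⟨fun ⟨h1, h2⟩ => hpq ?_, fun ⟨h1, h2⟩ => hpq ?_⟩
  · obtain ⟨e1, e2⟩ := hπ _ _ _ _ hp hq h1 h2
    exact Prod.ext e1 e2
  · obtain ⟨e1, e2⟩ := hπ _ _ _ _ hq hp h1 h2
    exact Prod.ext e1.symm e2.symm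

end Partitions

section GreedyLabel

variable {k : ℕ}

/- A partition of the positions `0, …, n - 1` into blocks indexed by `Fin k` is handled as a
labelling `ℓ : ℕ → Fin k` (values from `n` on are ignored). Positions count from `0`, so the
minimum of block `i` is the position `c i - 1`. -/

def LabelArc (ℓ : ℕ → Fin k) (x y : ℕ) : Prop :=
  x < y ∧ ℓ x = ℓ y ∧ ∀ z, x < z → z < y → ℓ z ≠ ℓ x

def LabelNonnesting (ℓ : ℕ → Fin k) (n : ℕ) : Prop :=
  ∀ x y r s, s < n → LabelArc ℓ x y → LabelArc ℓ r s → r ≤ x → y ≤ s → x = r ∧ y = s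

def countBelow (ℓ : ℕ → Fin k) (p : ℕ) (i : Fin k) : ℕ := #{q ∈ range p | ℓ q = i}

/-- Before position `p`, `q` is the last element of a block that is not yet full. -/
def IsPending (o : Fin k → ℕ) (ℓ : ℕ → Fin k) (p q : ℕ) : Prop :=
  q < p ∧ (∀ r, q < r → r < p → ℓ r ≠ ℓ q) ∧ countBelow ℓ p (ℓ q) < o (ℓ q)

section LabelCounts

variable {ℓ ℓ' : ℕ → Fin k} {p q : ℕ} {i : Fin k}

theorem countBelow_succ (ℓ : ℕ → Fin k) (p : ℕ) (i : Fin k) :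
    countBelow ℓ (p + 1) i = countBelow ℓ p i + if ℓ p = i then 1 else 0 := by
  unfold countBelow
  rw [range_add_one, filter_insert]
  split_ifs with h
  · rw [card_insert_of_notMem (by simp)]
  · rfl

theorem countBelow_mono (ℓ : ℕ → Fin k) (i : Fin k) : Monotone fun p => countBelow ℓ p i :=
  fun _ _ h => card_le_card (filter_subset_filter _ (range_subset_range.mpr h))

theorem sum_countBelow (ℓ : ℕ → Fin k) (p : ℕ) : ∑ i, countBelow ℓ p i = p := by
  unfold countBelow
  rw [← card_eq_sum_card_fiberwise fun q _ => mem_univ (ℓ q), card_range]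

theorem countBelow_congr (h : ∀ q < p, ℓ q = ℓ' q) : countBelow ℓ p = countBelow ℓ' p := by
  ext i
  unfold countBelow
  congr 1
  exact filter_congr fun q hq => by rw [h q (mem_range.mp hq)]

theorem countBelow_pos_iff : 0 < countBelow ℓ p i ↔ ∃ q < p, ℓ q = i := by
  simp [countBelow, card_pos, Finset.Nonempty]

theorem exists_last_of_lt (hq : q < p) (hℓ : ℓ q = i) :
    ∃ x, q ≤ x ∧ x < p ∧ ℓ x = i ∧ ∀ r, x < r → r < p → ℓ r ≠ i := by
  have hne : ({r ∈ range p | ℓ r = i} : Finset ℕ).Nonempty := ⟨q, by simp [hq, hℓ]⟩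
  obtain ⟨hx, hℓx⟩ := mem_filter.mp (max'_mem _ hne)
  refine ⟨_, le_max' _ q (by simp [hq, hℓ]), mem_range.mp hx, hℓx, fun r hr hrp hℓr => ?_⟩
  exact absurd (le_max' _ r (by simp [hrp, hℓr])) (not_le.mpr hr)

theorem exists_labelArc_of_lt (hq : q < p) (hℓ : ℓ q = ℓ p) : ∃ x, LabelArc ℓ x p := by
  obtain ⟨x, -, hxp, hℓx, hlast⟩ := exists_last_of_lt hq hℓ
  exact ⟨x, hxp, hℓx, fun z hxz hzp => hℓx ▸ hlast z hxz hzp⟩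

theorem exists_isPending_of_lt {o : Fin k → ℕ} (hpos : 0 < countBelow ℓ p i)
    (hlt : countBelow ℓ p i < o i) : ∃ q, IsPending o ℓ p q ∧ ℓ q = i := by
  obtain ⟨q, hq, hℓq⟩ := countBelow_pos_iff.mp hpos
  obtain ⟨x, -, hxp, rfl, hlast⟩ := exists_last_of_lt hq hℓq
  exact ⟨x, ⟨hxp, hlast, hlt⟩, rfl⟩

theorem exists_of_countBelow_lt {n : ℕ} (h : countBelow ℓ p i < countBelow ℓ n i) :
    ∃ s, p ≤ s ∧ s < n ∧ ℓ s = i := by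
  by_contra! hno
  refine h.not_ge (card_le_card fun s hs => ?_)
  simp only [mem_filter, mem_range] at hs ⊢
  exact ⟨not_le.mp fun hps => hno s hps hs.1 hs.2, hs.2⟩

theorem isPending_of_labelArc {o : Fin k → ℕ} {x y : ℕ} (h : LabelArc ℓ x y)
    (hle : countBelow ℓ (y + 1) (ℓ x) ≤ o (ℓ x)) : IsPending o ℓ y x := by
  refine ⟨h.1, h.2.2, lt_of_lt_of_le ?_ hle⟩
  rw [countBelow_succ, if_pos h.2.1.symm]
  exact Nat.lt_succ_self _

theorem exists_labelArc_of_isPending {o : Fin k → ℕ} {n : ℕ} (hq : IsPending o ℓ p q)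
    (hn : countBelow ℓ n (ℓ q) = o (ℓ q)) : ∃ s, p ≤ s ∧ s < n ∧ LabelArc ℓ q s := by
  classical
  have hex := exists_of_countBelow_lt (hq.2.2.trans_eq hn.symm)
  obtain ⟨hps, hsn, hℓs⟩ := Nat.find_spec hex
  refine ⟨_, hps, hsn, lt_of_lt_of_le hq.1 hps, hℓs.symm, fun z hqz hzs hℓz => ?_⟩
  by_cases hzp : z < p
  · exact hq.2.1 z hqz hzp hℓz
  · exact Nat.find_min hex hzs ⟨not_lt.mp hzp, lt_trans hzs hsn, hℓz⟩

end LabelCounts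

structure Admissible (n : ℕ) (c o : Fin k → ℕ) : Prop where
  strictMono : StrictMono c
  one_le_c : ∀ i, 1 ≤ c i
  one_le_o : ∀ i, 1 ≤ o i
  sum_eq : ∑ i, o i = n
  le_sum_add_one : ∀ i, c i ≤ (∑ j ∈ univ.filter fun j => j < i, o j) + 1

namespace Admissible

variable {n : ℕ} {c o : Fin k → ℕ} {ℓ : ℕ → Fin k} {p : ℕ}

theorem exists_isPending (h : Admissible n c o) (hp : p < n) (hpmin : ¬∃ i, c i = p + 1)
    (hle : ∀ i, countBelow ℓ p i ≤ o i) (hpos : ∀ i, 0 < countBelow ℓ p i ↔ c i ≤ p) :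
    ∃ q, IsPending o ℓ p q := by
  -- otherwise every started block is full, so `p` is the total size of the blocks before the
  -- first unstarted block `j`, and the bound on `c j` forces `c j = p + 1`
  by_contra hno
  have hfull : ∀ i, c i ≤ p → countBelow ℓ p i = o i := fun i hi =>
    (hle i).eq_or_lt.resolve_right fun hlt =>
      hno ((exists_isPending_of_lt ((hpos i).mpr hi) hlt).imp fun _ => And.left)
  have hstarted : ∑ i ∈ univ.filter (fun i => c i ≤ p), countBelow ℓ p i =
      ∑ i ∈ univ.filter (fun i => c i ≤ p), o i :=
    sum_congr rfl fun i hi => hfull i (mem_filter.mp hi).2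
  have hunstarted : ∑ i ∈ univ.filter (fun i => ¬c i ≤ p), countBelow ℓ p i = 0 :=
    sum_eq_zero fun i hi =>
      Nat.eq_zero_of_not_pos fun hi' => (mem_filter.mp hi).2 ((hpos i).mp hi')
  have hp_eq : p = ∑ i ∈ univ.filter (fun i => c i ≤ p), o i := by
    rw [← hstarted, ← add_zero (∑ i ∈ _, _), ← hunstarted, sum_filter_add_sum_filter_not,
      sum_countBelow]
  have hex : (univ.filter fun i => p < c i).Nonempty := by
    by_contra hne
    rw [not_nonempty_iff_eq_empty, filter_eq_empty_iff] at hne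
    rw [filter_true_of_mem fun i _ => not_lt.mp (hne (mem_univ i)), h.sum_eq] at hp_eq
    omega
  set j := (univ.filter fun i => p < c i).min' hex
  have hj : p < c j := (mem_filter.mp (min'_mem _ hex)).2
  have hlt_j : univ.filter (fun i => c i ≤ p) = univ.filter fun i => i < j := by
    ext i
    simp only [mem_filter, mem_univ, true_and]
    refine ⟨fun hi => lt_of_not_ge fun hji => ?_, fun hij => not_lt.mp fun hi => ?_⟩
    · exact (h.strictMono.monotone hji).not_gt (hi.trans_lt hj)
    · exact (min'_le _ i (mem_filter.mpr ⟨mem_univ i, hi⟩)).not_gt hij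
  have := h.le_sum_add_one j
  rw [← hlt_j, ← hp_eq] at this
  exact hpmin ⟨j, by omega⟩

theorem c_le (h : Admissible n c o) (i : Fin k) : c i ≤ n := by
  have hi : o i ≤ ∑ j ∈ univ.filter (fun j => ¬j < i), o j :=
    single_le_sum (fun _ _ => Nat.zero_le _) (mem_filter.mpr ⟨mem_univ i, lt_irrefl i⟩)
  have := sum_filter_add_sum_filter_not univ (fun j => j < i) o
  have := h.le_sum_add_one i
  have := h.one_le_o i
  have := h.sum_eq
  omega

theorem isParkingFunction_comp (h : Admissible n c o) {f : Fin n → Fin k}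
    (hf : ∀ i, Fintype.card {x // f x = i} = o i) : IsParkingFunction n (c ∘ f) := by
  refine ⟨fun x => mem_Icc.mpr ⟨h.one_le_c _, h.c_le _⟩, Tuple.sort (c ∘ f),
    Tuple.monotone_sort (c ∘ f), fun j => ?_⟩
  set g := Tuple.sort (c ∘ f)
  set i := f (g j)
  have hbefore : ∑ l ∈ univ.filter (· < i), o l ≤ j := calc
    ∑ l ∈ univ.filter (· < i), o l = #{x | f x < i} := by
      rw [card_eq_sum_card_fiberwise (f := f) (t := univ.filter (· < i))
        fun x hx => by simpa using hx]
      refine sum_congr rfl fun l hl => ?_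
      rw [← hf l, Fintype.card_subtype, filter_filter]
      congr 1
      ext x
      simp only [mem_filter, mem_univ, true_and, iff_and_self]
      rintro rfl
      simpa using hl
    _ = #{j' | f (g j') < i} := card_equiv g.symm fun x => by simp
    _ ≤ #(Iio j) := card_le_card fun j' hj' => by
      simp only [mem_filter, mem_univ, true_and, mem_Iio] at hj' ⊢
      exact lt_of_not_ge fun hle => (Tuple.monotone_sort (c ∘ f) hle).not_gt (h.strictMono hj')
    _ = j := Fin.card_Iio j
  simpa using (h.le_sum_add_one i).trans (by omega)

end Admissible

variable [NeZero k] (c o : Fin k → ℕ)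

open Classical in
/-- Position `p` (counted from `0`) opens block `i` when `c i = p + 1`; otherwise it joins the
pending block whose last element comes first. This first-in-first-out rule is what makes the
resulting partition nonnesting. -/
noncomputable def greedyStep (ℓ : ℕ → Fin k) (p : ℕ) : Fin k :=
  if h : ∃ i, c i = p + 1 then h.choose
  else if h' : ∃ q, IsPending o ℓ p q then ℓ (Nat.find h') else 0

/-- Agrees with `greedyLabel c o` below `p`; it only makes the course-of-values recursion
structural. -/
noncomputable def greedyPrefix : ℕ → ℕ → Fin k
  | 0 => fun _ => 0
  | p + 1 => Function.update (greedyPrefix p) p (greedyStep c o (greedyPrefix p) p)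

noncomputable def greedyLabel (p : ℕ) : Fin k := greedyPrefix c o (p + 1) p

variable {c o} {ℓ ℓ' : ℕ → Fin k} {p : ℕ}

theorem greedyStep_of_eq (hc : Function.Injective c) {i : Fin k} (h : c i = p + 1) :
    greedyStep c o ℓ p = i := by
  have hex : ∃ i, c i = p + 1 := ⟨i, h⟩
  rw [greedyStep, dif_pos hex]
  exact hc (hex.choose_spec.trans h.symm)

theorem greedyStep_spec (hmin : ¬∃ i, c i = p + 1) (hex : ∃ q, IsPending o ℓ p q) :
    ∃ q, IsPending o ℓ p q ∧ (∀ q', IsPending o ℓ p q' → q ≤ q') ∧ greedyStep c o ℓ p = ℓ q := by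
  classical
  refine ⟨Nat.find hex, Nat.find_spec hex, fun q' hq' => Nat.find_min' hex hq', ?_⟩
  rw [greedyStep, dif_neg hmin, dif_pos hex]

theorem greedyStep_eq_of_isLeast (hmin : ¬∃ i, c i = p + 1) {x : ℕ} (hx : IsPending o ℓ p x)
    (hleast : ∀ q, IsPending o ℓ p q → x ≤ q) : greedyStep c o ℓ p = ℓ x := by
  obtain ⟨q, hq, hqleast, hstep⟩ := greedyStep_spec hmin ⟨x, hx⟩
  rw [hstep, le_antisymm (hqleast x hx) (hleast q hq)]

theorem greedyStep_congr (h : ∀ q < p, ℓ q = ℓ' q) :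
    greedyStep c o ℓ p = greedyStep c o ℓ' p := by
  have hpend : ∀ q, IsPending o ℓ p q ↔ IsPending o ℓ' p q := fun q => by
    refine and_congr_right fun hq => ?_
    rw [countBelow_congr h, h q hq]
    exact and_congr_left' (forall_congr' fun r => imp_congr_right fun _ =>
      imp_congr_right fun hrp => by rw [h r hrp])
  by_cases hmin : ∃ i, c i = p + 1
  · simp only [greedyStep, dif_pos hmin]
  by_cases hex : ∃ q, IsPending o ℓ p q
  · obtain ⟨q, hq, hqleast, hstep⟩ := greedyStep_spec hmin hex
    obtain ⟨q', hq', hq'least, hstep'⟩ :=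
      greedyStep_spec (ℓ := ℓ') hmin (hex.imp fun q => (hpend q).mp)
    have hqq' : q = q' :=
      le_antisymm (hqleast q' ((hpend q').mpr hq')) (hq'least q ((hpend q).mp hq))
    rw [hstep, hstep', ← hqq', h q hq.1]
  · have hex' : ¬∃ q, IsPending o ℓ' p q := fun ⟨q, hq⟩ => hex ⟨q, (hpend q).mpr hq⟩
    simp only [greedyStep, dif_neg hmin, dif_neg hex, dif_neg hex']

theorem greedyPrefix_apply {q : ℕ} (hq : q < p) : greedyPrefix c o p q = greedyLabel c o q := by
  induction p with
  | zero => omega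
  | succ p ih =>
    rcases (Nat.lt_succ_iff_lt_or_eq.mp hq) with hq | rfl
    · rw [greedyPrefix, Function.update_of_ne hq.ne, ih hq]
    · rfl

theorem greedyLabel_eq_greedyStep (p : ℕ) :
    greedyLabel c o p = greedyStep c o (greedyLabel c o) p := by
  rw [greedyLabel, greedyPrefix, Function.update_self]
  exact greedyStep_congr fun q hq => greedyPrefix_apply hq

theorem greedyLabel_of_eq (hc : Function.Injective c) {i : Fin k} (hi : c i = p + 1) :
    greedyLabel c o p = i := by
  rw [greedyLabel_eq_greedyStep, greedyStep_of_eq hc hi]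

theorem eq_greedyLabel_of_eq_greedyStep {n : ℕ} (h : ∀ p < n, ℓ p = greedyStep c o ℓ p) :
    ∀ p < n, ℓ p = greedyLabel c o p := by
  intro p
  induction p using Nat.strong_induction_on with
  | _ p ih =>
    intro hp
    rw [h p hp, greedyLabel_eq_greedyStep]
    exact greedyStep_congr fun q hq => ih q hq (hq.trans hp)

theorem eq_greedyStep_of_labelNonnesting {n : ℕ} (hc : Function.Injective c)
    (hmin : ∀ i, ∃ q, c i = q + 1 ∧ ℓ q = i) (hge : ∀ p < n, c (ℓ p) ≤ p + 1)
    (hcount : ∀ i, countBelow ℓ n i = o i) (hnn : LabelNonnesting ℓ n) (hp : p < n) :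
    ℓ p = greedyStep c o ℓ p := by
  -- the predecessor `x` of `p` in its block is pending, and a pending `q < x` would open an arc
  -- `(q, s)` with `p < s`, nesting over `(x, p)`
  by_cases hpmin : ∃ i, c i = p + 1
  · obtain ⟨i, hi⟩ := hpmin
    obtain ⟨q, hq, hℓq⟩ := hmin i
    rw [greedyStep_of_eq hc hi, ← hℓq, show q = p by omega]
  obtain ⟨q₀, hq₀, hℓq₀⟩ := hmin (ℓ p)
  have hq₀p : q₀ < p := by
    have := hge p hp
    exact lt_of_le_of_ne (by omega) fun h => hpmin ⟨ℓ p, by omega⟩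
  obtain ⟨x, hx⟩ := exists_labelArc_of_lt hq₀p hℓq₀
  have hxpend : IsPending o ℓ p x :=
    isPending_of_labelArc hx ((countBelow_mono ℓ _ hp).trans (hcount _).le)
  rw [greedyStep_eq_of_isLeast hpmin hxpend fun q hq => ?_, hx.2.1]
  obtain ⟨s, hps, hsn, hqs⟩ := exists_labelArc_of_isPending hq (hcount _)
  by_contra! hqx
  exact hqx.ne' (hnn x p q s hsn hx hqs hqx.le hps).1

namespace Admissible

variable {n : ℕ}

theorem countBelow_greedyLabel_lt_and_c_le (h : Admissible n c o) (hp : p < n)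
    (hle : ∀ i, countBelow (greedyLabel c o) p i ≤ o i)
    (hpos : ∀ i, 0 < countBelow (greedyLabel c o) p i ↔ c i ≤ p) :
    countBelow (greedyLabel c o) p (greedyLabel c o p) < o (greedyLabel c o p) ∧
      c (greedyLabel c o p) ≤ p + 1 := by
  by_cases hpmin : ∃ i, c i = p + 1
  · obtain ⟨i, hi⟩ := hpmin
    have hLp : greedyLabel c o p = i := greedyLabel_of_eq h.strictMono.injective hi
    have hzero : countBelow (greedyLabel c o) p i = 0 :=
      Nat.eq_zero_of_not_pos fun hi' => by have := (hpos i).mp hi'; omega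
    exact ⟨hLp ▸ hzero ▸ h.one_le_o i, hLp ▸ hi.le⟩
  · obtain ⟨q, hq, -, hstep⟩ := greedyStep_spec hpmin (h.exists_isPending hp hpmin hle hpos)
    have hLp : greedyLabel c o p = greedyLabel c o q := (greedyLabel_eq_greedyStep p).trans hstep
    refine ⟨hLp ▸ hq.2.2, ?_⟩
    rw [hLp]
    exact ((hpos _).mp (countBelow_pos_iff.mpr ⟨q, hq.1, rfl⟩)).trans (Nat.le_succ p)

theorem countBelow_greedyLabel (h : Admissible n c o) (hp : p ≤ n) :
    (∀ i, countBelow (greedyLabel c o) p i ≤ o i) ∧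
      ∀ i, 0 < countBelow (greedyLabel c o) p i ↔ c i ≤ p := by
  induction p with
  | zero =>
    refine ⟨fun i => by simp [countBelow], fun i => ?_⟩
    simpa [countBelow] using Nat.one_le_iff_ne_zero.mp (h.one_le_c i)
  | succ p ih =>
    obtain ⟨hle, hpos⟩ := ih (by omega)
    obtain ⟨hlt, hcle⟩ := h.countBelow_greedyLabel_lt_and_c_le (by omega) hle hpos
    refine ⟨fun i => ?_, fun i => ?_⟩ <;> rw [countBelow_succ] <;>
      by_cases hi : greedyLabel c o p = i
    · subst hi; simpa using hlt
    · simpa [hi] using hle i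
    · subst hi; simpa using hcle
    · rw [if_neg hi, add_zero, hpos i]
      exact ⟨fun h' => h'.trans (Nat.le_succ p),
        fun h' => Nat.le_of_lt_succ (lt_of_le_of_ne h' fun hc =>
          hi (greedyLabel_of_eq h.strictMono.injective hc))⟩

theorem countBelow_greedyLabel_eq (h : Admissible n c o) (i : Fin k) :
    countBelow (greedyLabel c o) n i = o i := by
  have hle := (h.countBelow_greedyLabel le_rfl).1
  have hsum : ∑ i, countBelow (greedyLabel c o) n i = ∑ i, o i := by
    rw [sum_countBelow, h.sum_eq]
  exact (sum_eq_sum_iff_of_le fun i _ => hle i).mp hsum i (mem_univ i)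

theorem c_greedyLabel_le (h : Admissible n c o) (hp : p < n) :
    c (greedyLabel c o p) ≤ p + 1 :=
  ((h.countBelow_greedyLabel hp).2 _).mp (countBelow_pos_iff.mpr ⟨p, Nat.lt_succ_self p, rfl⟩)

theorem isLeast_pending_of_labelArc (h : Admissible n c o) {x y : ℕ}
    (hxy : LabelArc (greedyLabel c o) x y) (hy : y < n) :
    IsPending o (greedyLabel c o) y x ∧ ∀ q, IsPending o (greedyLabel c o) y q → x ≤ q := by
  have hx : IsPending o (greedyLabel c o) y x :=
    isPending_of_labelArc hxy ((h.countBelow_greedyLabel hy).1 _)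
  have hymin : ¬∃ i, c i = y + 1 := fun ⟨i, hi⟩ => by
    have hLy : greedyLabel c o y = i := greedyLabel_of_eq h.strictMono.injective hi
    have := ((h.countBelow_greedyLabel hy.le).2 i).mp
      (countBelow_pos_iff.mpr ⟨x, hxy.1, hxy.2.1.trans hLy⟩)
    omega
  obtain ⟨q, hq, hqleast, hstep⟩ := greedyStep_spec hymin ⟨x, hx⟩
  have hqx : q = x := (hqleast x hx).eq_or_lt.resolve_right fun hlt =>
    hq.2.1 x hlt hxy.1 (hxy.2.1.trans ((greedyLabel_eq_greedyStep y).trans hstep))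
  exact ⟨hx, fun q' hq' => hqx ▸ hqleast q' hq'⟩

theorem labelNonnesting_greedyLabel (h : Admissible n c o) :
    LabelNonnesting (greedyLabel c o) n := by
  intro x y r s hs hxy hrs hrx hys
  obtain ⟨-, hxleast⟩ := h.isLeast_pending_of_labelArc hxy (hys.trans_lt hs)
  obtain ⟨hr, -⟩ := h.isLeast_pending_of_labelArc hrs hs
  rcases hys.eq_or_lt with rfl | hys
  · exact ⟨le_antisymm (hxleast r hr) hrx, rfl⟩
  · have hr' : IsPending o (greedyLabel c o) y r :=
      ⟨hrx.trans_lt hxy.1, fun z hrz hzy => hrs.2.2 z hrz (hzy.trans hys),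
        (countBelow_mono _ _ hys.le).trans_lt hr.2.2⟩
    obtain rfl := le_antisymm (hxleast r hr') hrx
    exact absurd hxy.2.1.symm (hrs.2.2 y hxy.1 hys)

end Admissible

end GreedyLabel

section LabelledPartitions

variable {n k : ℕ} {π : Finpartition (univ : Finset (Fin n))} {ℓ : ℕ → Fin k}

theorem countBelow_eq_card (ℓ : ℕ → Fin k) (i : Fin k) :
    countBelow ℓ n i = Fintype.card {x : Fin n // ℓ x = i} := by
  rw [Fintype.card_subtype, countBelow]
  refine card_bij (fun q hq => ⟨q, mem_range.mp (mem_filter.mp hq).1⟩) ?_ ?_ ?_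
  · intro q hq
    simpa using (mem_filter.mp hq).2
  · intro q _ r _ h
    simpa using h
  · intro x hx
    exact ⟨x, by simpa using (mem_filter.mp hx).2, rfl⟩

theorem isArc_iff_labelArc (hℓ : ∀ x y : Fin n, SameBlock π x y ↔ ℓ x = ℓ y) {x y : Fin n} :
    IsArc π x y ↔ LabelArc ℓ x y := by
  refine and_congr Iff.rfl (and_congr (hℓ x y) ⟨fun h z hxz hzy hz => ?_, fun h z hxz hz => ?_⟩)
  · exact h ⟨z, hzy.trans y.2⟩ ((hℓ _ _).mpr hz.symm) ⟨hxz, hzy⟩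
  · exact h z hz.1 hz.2 ((hℓ x z).mp hxz).symm

theorem isNonnesting_iff_labelNonnesting (hℓ : ∀ x y : Fin n, SameBlock π x y ↔ ℓ x = ℓ y) :
    IsNonnesting π ↔ LabelNonnesting ℓ n := by
  simp only [IsNonnesting, isArc_iff_labelArc hℓ]
  refine ⟨fun h x y r s hs hxy hrs hrx hys => ?_, fun h x y r s hxy hrs hrx hys => ?_⟩
  · have hy : y < n := hys.trans_lt hs
    have := h ⟨x, hxy.1.trans hy⟩ ⟨y, hy⟩ ⟨r, hrs.1.trans hs⟩ ⟨s, hs⟩ hxy hrs hrx hys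
    simpa [Fin.ext_iff] using this
  · have := h x y r s s.2 hxy hrs hrx hys
    exact ⟨Fin.ext this.1, Fin.ext this.2⟩

end LabelledPartitions

section GreedyPartition

variable {n k : ℕ} [NeZero k] {c o : Fin k → ℕ}

open Classical in
noncomputable def greedyPartition (n : ℕ) (c o : Fin k → ℕ) :
    Finpartition (univ : Finset (Fin n)) :=
  Finpartition.ofSetoid (Setoid.ker fun x : Fin n => greedyLabel c o x)

open Classical in
theorem sameBlock_greedyPartition {x y : Fin n} :
    SameBlock (greedyPartition n c o) x y ↔ greedyLabel c o x = greedyLabel c o y :=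
  sameBlock_ofSetoid_ker _

theorem part_greedyPartition (x : Fin n) :
    (greedyPartition n c o).part x =
      univ.filter fun y : Fin n => greedyLabel c o y = greedyLabel c o x := by
  ext y
  rw [← sameBlock_iff_mem_part, sameBlock_greedyPartition, mem_filter]
  simp [eq_comm]

theorem exists_label_of_blocks {π : Finpartition (univ : Finset (Fin n))}
    (B : Fin k → Finset (Fin n)) (hB : ∀ i, B i ∈ π.parts) (hinj : Function.Injective B)
    (hcard : #π.parts = k) : ∃ ℓ : ℕ → Fin k, ∀ (x : Fin n) i, x ∈ B i ↔ ℓ x = i := by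
  have hparts : univ.image B = π.parts := eq_of_subset_of_card_le
    (fun _ hP => by obtain ⟨i, -, rfl⟩ := mem_image.mp hP; exact hB i)
    (by rw [hcard, card_image_of_injective _ hinj, card_univ, Fintype.card_fin])
  have hex : ∀ x : Fin n, ∃ i, x ∈ B i := fun x => by
    obtain ⟨P, hP, hx⟩ := π.exists_mem (mem_univ x)
    obtain ⟨i, -, rfl⟩ := mem_image.mp (hparts ▸ hP)
    exact ⟨i, hx⟩
  choose μ hμ using hex
  refine ⟨fun p => if hp : p < n then μ ⟨p, hp⟩ else 0, fun x i => ?_⟩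
  simp only [Fin.is_lt, dif_pos, Fin.eta]
  exact ⟨fun hx => hinj (π.eq_of_mem_parts (hB _) (hB _) (hμ x) hx), fun h => h ▸ hμ x⟩

namespace Admissible

theorem exists_block_min (h : Admissible n c o) (i : Fin k) :
    ∃ m : Fin n, (m : ℕ) + 1 = c i ∧ greedyLabel c o m = i := by
  have := h.one_le_c i
  have := h.c_le i
  exact ⟨⟨c i - 1, by omega⟩, by simp; omega,
    greedyLabel_of_eq h.strictMono.injective (by simp; omega)⟩

theorem card_fiber_greedyLabel (h : Admissible n c o) (i : Fin k) :
    Fintype.card {x : Fin n // greedyLabel c o x = i} = o i := by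
  rw [← countBelow_eq_card, h.countBelow_greedyLabel_eq]

theorem isNonnesting_greedyPartition (h : Admissible n c o) :
    IsNonnesting (greedyPartition n c o) :=
  (isNonnesting_iff_labelNonnesting fun _ _ => sameBlock_greedyPartition).mpr
    h.labelNonnesting_greedyLabel

theorem card_parts_greedyPartition (h : Admissible n c o) :
    #(greedyPartition n c o).parts = k := by
  set π₀ := greedyPartition n c o
  choose m hm hLm using h.exists_block_min
  have hparts : π₀.parts = univ.image fun i => π₀.part (m i) := by
    rw [parts_eq_image_part]
    ext B
    simp only [mem_image, mem_univ, true_and]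
    refine ⟨fun ⟨x, hx⟩ => ⟨greedyLabel c o x, ?_⟩, fun ⟨i, hi⟩ => ⟨m i, hi⟩⟩
    rw [← hx, part_greedyPartition, part_greedyPartition, hLm]
  rw [hparts, card_image_of_injective, card_univ, Fintype.card_fin]
  intro i j hij
  have hij : π₀.part (m i) = π₀.part (m j) := hij
  have : m j ∈ π₀.part (m i) := hij ▸ π₀.mem_part_self.mpr (mem_univ _)
  rw [part_greedyPartition, mem_filter, hLm, hLm] at this
  exact this.2.symm

theorem greedyPartition_blocks (h : Admissible n c o) (i : Fin k) :
    ∃ B ∈ (greedyPartition n c o).parts, #B = o i ∧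
      ∃ hB : B.Nonempty, (B.min' hB).val + 1 = c i := by
  set π₀ := greedyPartition n c o
  obtain ⟨m, hm, hLm⟩ := h.exists_block_min i
  have hmem : m ∈ π₀.part m := π₀.mem_part_self.mpr (mem_univ _)
  refine ⟨_, π₀.part_mem.mpr (mem_univ m), ?_, ⟨m, hmem⟩, ?_⟩
  · rw [part_greedyPartition, hLm, ← Fintype.card_subtype, h.card_fiber_greedyLabel]
  · suffices (π₀.part m).min' ⟨m, hmem⟩ = m by rw [this, hm]
    refine le_antisymm (min'_le _ _ hmem) (le_min' _ _ _ fun y hy => ?_)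
    rw [part_greedyPartition, mem_filter, hLm] at hy
    have := h.c_greedyLabel_le y.2
    rw [hy.2, ← hm] at this
    exact Fin.le_def.mpr (by omega)

theorem eq_greedyPartition (h : Admissible n c o) {π : Finpartition (univ : Finset (Fin n))}
    (hnn : IsNonnesting π) (hcard : #π.parts = k)
    (hblocks : ∀ i, ∃ B ∈ π.parts, #B = o i ∧ ∃ hB : B.Nonempty, (B.min' hB).val + 1 = c i) :
    π = greedyPartition n c o := by
  choose B hB hBcard hBne hBmin using hblocks
  have hinj : Function.Injective B := fun i j hij => h.strictMono.injective <| by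
    rw [← hBmin i, ← hBmin j]
    simp only [hij]
  obtain ⟨ℓ, hℓ⟩ := exists_label_of_blocks B hB hinj hcard
  have hsame : ∀ x y : Fin n, SameBlock π x y ↔ ℓ x = ℓ y := fun x y => by
    refine ⟨fun ⟨P, hP, hx, hy⟩ => ?_,
      fun hxy => ⟨B (ℓ x), hB _, (hℓ x _).mpr rfl, (hℓ y _).mpr hxy.symm⟩⟩
    have hPx : P = B (ℓ x) := π.eq_of_mem_parts hP (hB _) hx ((hℓ x _).mpr rfl)
    exact ((hℓ y _).mp (hPx ▸ hy)).symm
  have hmin : ∀ i, ∃ q, c i = q + 1 ∧ ℓ q = i := fun i =>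
    ⟨_, (hBmin i).symm, (hℓ _ i).mp (min'_mem _ _)⟩
  have hge : ∀ p < n, c (ℓ p) ≤ p + 1 := fun p hp => by
    have := min'_le (B (ℓ p)) ⟨p, hp⟩ ((hℓ ⟨p, hp⟩ _).mpr rfl)
    rw [← hBmin (ℓ p)]
    exact Nat.succ_le_succ (Fin.le_def.mp this)
  have hcount : ∀ i, countBelow ℓ n i = o i := fun i => by
    rw [countBelow_eq_card, ← hBcard i, Fintype.card_subtype]
    congr 1
    ext x
    simp [hℓ x i]
  have hgreedy : ∀ p < n, ℓ p = greedyLabel c o p := eq_greedyLabel_of_eq_greedyStep fun p hp =>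
    eq_greedyStep_of_labelNonnesting h.strictMono.injective hmin hge hcount
      ((isNonnesting_iff_labelNonnesting hsame).mp hnn) hp
  refine eq_of_sameBlock_iff fun x y => ?_
  rw [hsame, sameBlock_greedyPartition, hgreedy x x.2, hgreedy y y.2]

end Admissible

end GreedyPartition

section Counting

variable {n k : ℕ} [NeZero k] {c o : Fin k → ℕ}

theorem forall_isArc_greedyPartition_iff {w : Equiv.Perm (Fin n)} :
    (∀ x y, IsArc (greedyPartition n c o) x y → w x < w y) ↔
      StrictMonoOnFibers (fun x : Fin n => greedyLabel c o x) w :=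
  ⟨fun hw _ _ hxy => lt_of_sameBlock_of_forall_isArc hw (sameBlock_greedyPartition.mpr hxy),
    fun hw x y hxy => hw x y (sameBlock_greedyPartition.mp hxy.2.1) hxy.1⟩

namespace Admissible

noncomputable def arcPairsEquiv (h : Admissible n c o) :
    {p : Equiv.Perm (Fin n) × Set (Fin n × Fin n) // IsAntichainQw n p.1 p.2 ∧
      ∃ π : Finpartition (univ : Finset (Fin n)), IsNonnesting π ∧
        p.2 = {q : Fin n × Fin n | IsArc π q.1 q.2} ∧ #π.parts = k ∧
        ∀ i : Fin k, ∃ B ∈ π.parts, #B = o i ∧ ∃ hB : B.Nonempty, (B.min' hB).val + 1 = c i} ≃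
      {w : Equiv.Perm (Fin n) // StrictMonoOnFibers (fun x : Fin n => greedyLabel c o x) w} where
  toFun p := ⟨p.1.1, by
    obtain ⟨hA, π, hπ, hp, hcard, hblocks⟩ := p.2
    obtain rfl := h.eq_greedyPartition hπ hcard hblocks
    rw [hp, isAntichainQw_arcs_iff hπ] at hA
    exact forall_isArc_greedyPartition_iff.mp hA⟩
  invFun w := ⟨(w.1, {q | IsArc (greedyPartition n c o) q.1 q.2}),
    (isAntichainQw_arcs_iff h.isNonnesting_greedyPartition w.1).mpr
      (forall_isArc_greedyPartition_iff.mpr w.2),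
    _, h.isNonnesting_greedyPartition, rfl, h.card_parts_greedyPartition, h.greedyPartition_blocks⟩
  left_inv p := by
    obtain ⟨⟨w, A⟩, hA, π, hπ, hp, hcard, hblocks⟩ := p
    obtain rfl := h.eq_greedyPartition hπ hcard hblocks
    exact Subtype.ext (Prod.ext rfl hp.symm)
  right_inv w := rfl

theorem card_parkingFunctions_eq (h : Admissible n c o) :
    Nat.card {a : Fin n → ℕ // IsParkingFunction n a ∧
        univ.val.map a = ∑ i : Fin k, Multiset.replicate (o i) (c i)} =
      Nat.card {f : Fin n → Fin k // ∀ i, Fintype.card {x // f x = i} = o i} := by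
  let e := fiberCardsEquiv (α := Fin n) h.strictMono.injective o
  have hparking : ∀ a, univ.val.map a = ∑ i : Fin k, Multiset.replicate (o i) (c i) →
      IsParkingFunction n a := fun a ha => by
    have hcomp : c ∘ (e.symm ⟨a, ha⟩).1 = a := congrArg Subtype.val (e.apply_symm_apply ⟨a, ha⟩)
    exact hcomp ▸ h.isParkingFunction_comp (e.symm ⟨a, ha⟩).2
  exact (Nat.card_congr (e.trans (Equiv.subtypeEquivRight fun a =>
    (and_iff_right_of_imp (hparking a)).symm))).symm

theorem card_arcPairs_eq (h : Admissible n c o) :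
    Nat.card {p : Equiv.Perm (Fin n) × Set (Fin n × Fin n) // IsAntichainQw n p.1 p.2 ∧
      ∃ π : Finpartition (univ : Finset (Fin n)), IsNonnesting π ∧
        p.2 = {q : Fin n × Fin n | IsArc π q.1 q.2} ∧ #π.parts = k ∧
        ∀ i : Fin k, ∃ B ∈ π.parts, #B = o i ∧ ∃ hB : B.Nonempty, (B.min' hB).val + 1 = c i} =
      Nat.card {f : Fin n → Fin k // ∀ i, Fintype.card {x // f x = i} = o i} :=
  Nat.card_congr (h.arcPairsEquiv.trans ((strictMonoOnFibersEquiv _).trans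
    (Equiv.subtypeEquivRight fun f => by simp only [h.card_fiber_greedyLabel])))

end Admissible

end Counting

theorem card_parkingFunctions_multiset_general (n k : ℕ) (hk1 : 1 ≤ k) (c o : Fin k → ℕ)
    (hc1 : c ⟨0, hk1⟩ = 1) (hc : StrictMono c)
    (ho : ∀ i, 1 ≤ o i) (hsum : ∑ i, o i = n)
    (hco : ∀ i : Fin k, 0 < (i : ℕ) →
      c i ≤ (∑ j ∈ Finset.univ.filter fun j => j < i, o j) + 1) :
    Nat.card {a : Fin n → ℕ // IsParkingFunction n a ∧
        Finset.univ.val.map a = ∑ i : Fin k, Multiset.replicate (o i) (c i)} =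
      Nat.multinomial Finset.univ o ∧
    Nat.card {a : Fin n → ℕ // IsParkingFunction n a ∧
        Finset.univ.val.map a = ∑ i : Fin k, Multiset.replicate (o i) (c i)} =
      Nat.card {p : Equiv.Perm (Fin n) × Set (Fin n × Fin n) //
        IsAntichainQw n p.1 p.2 ∧
          ∃ π : Finpartition (Finset.univ : Finset (Fin n)), IsNonnesting π ∧
            p.2 = {q : Fin n × Fin n | IsArc π q.1 q.2} ∧
            π.parts.card = k ∧
            ∀ i : Fin k, ∃ B ∈ π.parts, B.card = o i ∧
              ∃ hB : B.Nonempty, (B.min' hB).val + 1 = c i} := by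
  have : NeZero k := ⟨by omega⟩
  have h : Admissible n c o :=
    { strictMono := hc
      one_le_c := fun i => hc1 ▸ hc.monotone (Nat.zero_le i)
      one_le_o := ho
      sum_eq := hsum
      le_sum_add_one := fun i => by
        rcases Nat.eq_zero_or_pos i with hi | hi
        · rw [show i = ⟨0, hk1⟩ from Fin.ext hi, hc1]
          exact Nat.le_add_left 1 _
        · exact hco i hi }
  have hfibers := card_fiberCards_eq_multinomial (α := Fin n) o (by rw [hsum, Fintype.card_fin])
  exact ⟨h.card_parkingFunctions_eq.trans hfibers,
    h.card_parkingFunctions_eq.trans h.card_arcPairs_eq.symm⟩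

/-- Fix `1 = c₁ < ⋯ < c_k ≤ n` and `o₁, …, o_k ≥ 1` with `o₁ + ⋯ + o_k = n` and
`cᵢ ≤ o₁ + ⋯ + o_{i-1} + 1`.  The number of parking functions of length `n` whose
multiset of entries consists of `cᵢ` with multiplicity `oᵢ` equals the multinomial
coefficient `n!/(o₁!⋯o_k!)`, and this also equals the number of pairs `(w, A)` of a
permutation `w` of `[n]` and an antichain `A` of `Q_w` which is the arc set of a
nonnesting partition of `[n]` with `k` blocks, block minima `c₁, …, c_k`, and block of
minimum `cᵢ` of cardinality `oᵢ`. -/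
theorem card_parkingFunctions_multiset (n k : ℕ) (hn : 1 ≤ n) (hk1 : 1 ≤ k)
    (hk2 : k ≤ n) (c o : Fin k → ℕ)
    (hc1 : c ⟨0, hk1⟩ = 1) (hc : StrictMono c) (hcn : ∀ i, c i ≤ n)
    (ho : ∀ i, 1 ≤ o i) (hsum : ∑ i, o i = n)
    (hco : ∀ i : Fin k, 0 < (i : ℕ) →
      c i ≤ (∑ j ∈ Finset.univ.filter fun j => j < i, o j) + 1) :
    Nat.card {a : Fin n → ℕ // IsParkingFunction n a ∧
        Finset.univ.val.map a = ∑ i : Fin k, Multiset.replicate (o i) (c i)} =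
      Nat.multinomial Finset.univ o ∧
    Nat.card {a : Fin n → ℕ // IsParkingFunction n a ∧
        Finset.univ.val.map a = ∑ i : Fin k, Multiset.replicate (o i) (c i)} =
      Nat.card {p : Equiv.Perm (Fin n) × Set (Fin n × Fin n) //
        IsAntichainQw n p.1 p.2 ∧
          ∃ π : Finpartition (Finset.univ : Finset (Fin n)), IsNonnesting π ∧
            p.2 = {q : Fin n × Fin n | IsArc π q.1 q.2} ∧
            π.parts.card = k ∧
            ∀ i : Fin k, ∃ B ∈ π.parts, B.card = o i ∧
              ∃ hB : B.Nonempty, (B.min' hB).val + 1 = c i} :=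
  card_parkingFunctions_multiset_general n k hk1 c o hc1 hc ho hsum hco
end

section
/- If π and π′ are nonnesting partitions of [n] such that for every c ∈ [n] and every s ≥ 1, π has a block with minimum element c and cardinality s if and only if π′ does, then π = π′. In other words, a nonnesting partition of [n] is uniquely determined by the set of minima of its blocks together with the assignment to each minimum of the size of its block. -/
/-! Scan `[n]` from left to right, assuming `π` and `π'` agree on `{x | x < j}`. Whether `j` is a
block minimum is part of the data, and then `j` starts a new block in both partitions. Otherwise
`j` joins the block of its predecessor `p`, and `p` is the least `a < j` that is *open* at `j`
(the arc leaving `a` ends at or after `j`): a smaller open `a` would give an arc nesting `(p, j)`.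
Openness of `a` at `j` is decided by the partition below `j` together with the size of the block
of `a`, which the data supplies through the minimum of that block. So `p` is the same for `π` and
`π'`, and the two partitions also agree on `{x | x ≤ j}`. -/

open Finset

namespace Finpartition

section

variable {α : Type*} [LinearOrder α] {t : Finset α}

theorem mem_part_comm (P : Finpartition t) {a b : α} : a ∈ P.part b ↔ b ∈ P.part a := by
  simp only [mem_part_iff_exists, and_comm]

theorem eq_of_forall_part_eq {P Q : Finpartition t} (h : ∀ a ∈ t, P.part a = Q.part a) :
    P = Q := by
  suffices key : ∀ {P Q : Finpartition t}, (∀ a ∈ t, P.part a = Q.part a) →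
      ∀ B ∈ P.parts, B ∈ Q.parts from
    Finpartition.ext (Finset.ext fun B ↦
      ⟨key h B, key (fun a ha ↦ (h a ha).symm) B⟩)
  intro P Q h B hB
  obtain ⟨a, ha, rfl⟩ := P.part_surjOn hB
  rw [h a ha]
  exact Q.part_mem.2 ha

theorem mem_part_iff_of_forall_lt_max {P Q : Finpartition t} {a b : α}
    (h : ∀ x < max a b, max a b ∈ P.part x ↔ max a b ∈ Q.part x) :
    b ∈ P.part a ↔ b ∈ Q.part a := by
  rcases lt_trichotomy a b with hab | rfl | hba
  · rw [max_eq_right hab.le] at h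
    exact h a hab
  · simp only [mem_part_self]
  · rw [max_eq_left hba.le] at h
    rw [P.mem_part_comm, Q.mem_part_comm]
    exact h b hba

def cardAtMin (P : Finpartition t) (c : α) : ℕ :=
  if ∀ x ∈ P.part c, c ≤ x then #(P.part c) else 0

theorem cardAtMin_of_forall_le {P : Finpartition t} {c : α} (h : ∀ x ∈ P.part c, c ≤ x) :
    P.cardAtMin c = #(P.part c) :=
  if_pos h

theorem cardAtMin_ne_zero_iff {P : Finpartition t} {c : α} (hc : c ∈ t) :
    P.cardAtMin c ≠ 0 ↔ ∀ x ∈ P.part c, c ≤ x := by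
  unfold cardAtMin
  split_ifs with h
  · exact iff_of_true (card_ne_zero_of_mem (P.mem_part hc)) h
  · exact iff_of_false (not_not.2 rfl) h

theorem cardAtMin_min' {P : Finpartition t} {B : Finset α} (hB : B ∈ P.parts)
    (hBne : B.Nonempty) : P.cardAtMin (B.min' hBne) = #B := by
  have hpart : P.part (B.min' hBne) = B := P.part_eq_of_mem hB (min'_mem _ _)
  have hmin : ∀ x ∈ P.part (B.min' hBne), B.min' hBne ≤ x := by
    rw [hpart]
    exact fun x hx ↦ min'_le _ _ hx
  rw [cardAtMin_of_forall_le hmin, hpart]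

theorem cardAtMin_eq_iff (P : Finpartition t) {c : α} {k : ℕ} (hk : 1 ≤ k) :
    P.cardAtMin c = k ↔ ∃ B ∈ P.parts, #B = k ∧ ∃ hB : B.Nonempty, B.min' hB = c := by
  constructor
  · intro h
    have hmin : ∀ x ∈ P.part c, c ≤ x := by
      by_contra hc
      rw [cardAtMin, if_neg hc] at h
      omega
    rw [cardAtMin_of_forall_le hmin] at h
    have hc : c ∈ P.part c := by
      obtain ⟨x, hx⟩ := card_pos.1 (h ▸ hk)
      exact P.mem_part (P.part_nonempty.1 ⟨x, hx⟩)
    refine ⟨P.part c, P.part_mem.2 (P.part_nonempty.1 ⟨c, hc⟩), h, ⟨c, hc⟩, ?_⟩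
    exact le_antisymm (min'_le _ _ hc) (le_min' _ _ _ hmin)
  · rintro ⟨B, hB, rfl, hBne, rfl⟩
    exact cardAtMin_min' hB hBne

theorem cardAtMin_eq_of_iff {P Q : Finpartition t}
    (h : ∀ c : α, ∀ k : ℕ, 1 ≤ k →
      ((∃ B ∈ P.parts, #B = k ∧ ∃ hB : B.Nonempty, B.min' hB = c) ↔
        (∃ B ∈ Q.parts, #B = k ∧ ∃ hB : B.Nonempty, B.min' hB = c))) :
    P.cardAtMin = Q.cardAtMin := by
  funext c
  have hPQ : ∀ k, 1 ≤ k → (P.cardAtMin c = k ↔ Q.cardAtMin c = k) := fun k hk ↦ by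
    rw [P.cardAtMin_eq_iff hk, Q.cardAtMin_eq_iff hk]
    exact h c k hk
  rcases Nat.eq_zero_or_pos (P.cardAtMin c) with hP | hP
  · rcases Nat.eq_zero_or_pos (Q.cardAtMin c) with hQ | hQ
    · rw [hP, hQ]
    · exact (hPQ _ hQ).2 rfl
  · exact ((hPQ _ hP).1 rfl).symm

end

section

variable {n : ℕ} {π π' : Finpartition (univ : Finset (Fin n))}

theorem sameBlock_iff_mem_part {i j : Fin n} : SameBlock π i j ↔ i ∈ π.part j :=
  π.mem_part_iff_exists.symm

theorem isArc_of_forall_not_between {i j : Fin n} (hij : i < j) (hi : i ∈ π.part j)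
    (h : ∀ k ∈ π.part j, ¬(i < k ∧ k < j)) : IsArc π i j := by
  have hpart : π.part i = π.part j := π.part_eq_of_mem (π.part_mem.2 (mem_univ j)) hi
  refine ⟨hij, sameBlock_iff_mem_part.2 hi, fun k hk ↦ h k ?_⟩
  rw [← hpart, π.mem_part_comm]
  exact sameBlock_iff_mem_part.1 hk

/-- The arc leaving `a` starts before `j` and ends at or after `j`. -/
def IsOpenAt (π : Finpartition (univ : Finset (Fin n))) (a j : Fin n) : Prop :=
  a < j ∧ (∀ x ∈ π.part a, x < j → x ≤ a) ∧ ¬∀ x ∈ π.part a, x < j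

theorem IsOpenAt.exists_isArc {a j : Fin n} (h : IsOpenAt π a j) :
    ∃ t, IsArc π a t ∧ j ≤ t := by
  obtain ⟨haj, hlast, hbeyond⟩ := h
  push Not at hbeyond
  obtain ⟨x, hx, hjx⟩ := hbeyond
  have hne : ((π.part a).filter (a < ·)).Nonempty :=
    ⟨x, mem_filter.2 ⟨hx, haj.trans_le hjx⟩⟩
  obtain ⟨ht, hat⟩ := mem_filter.1 (min'_mem _ hne)
  set t := ((π.part a).filter (a < ·)).min' hne
  have hpart : π.part t = π.part a := π.part_eq_of_mem (π.part_mem.2 (mem_univ a)) ht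
  refine ⟨t, isArc_of_forall_not_between hat ?_ ?_, ?_⟩
  · rw [hpart]
    exact π.mem_part (mem_univ a)
  · rintro k hk ⟨hak, hkt⟩
    rw [hpart] at hk
    exact (min'_le _ k (mem_filter.2 ⟨hk, hak⟩)).not_gt hkt
  · by_contra htj
    exact (hlast t ht (not_le.1 htj)).not_gt hat

theorem isLeast_isOpenAt (hπ : IsNonnesting π) {p j : Fin n} (hp : p ∈ π.part j) (hpj : p < j)
    (hmax : ∀ x ∈ π.part j, x < j → x ≤ p) : IsLeast {a | IsOpenAt π a j} p := by
  have hpart : π.part p = π.part j := π.part_eq_of_mem (π.part_mem.2 (mem_univ j)) hp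
  have harc : IsArc π p j := isArc_of_forall_not_between hpj hp fun k hk ⟨hpk, hkj⟩ ↦
    (hmax k hk hkj).not_gt hpk
  refine ⟨⟨hpj, hpart ▸ hmax, fun h ↦ ?_⟩, fun a ha ↦ ?_⟩
  · exact lt_irrefl j (h j (hpart ▸ π.mem_part (mem_univ j)))
  · obtain ⟨t, hat, hjt⟩ := IsOpenAt.exists_isArc ha
    by_contra hap
    exact hap (hπ p j a t harc hat (not_le.1 hap).le hjt).1.le

theorem exists_isLeast_isOpenAt (hπ : IsNonnesting π) {j : Fin n}
    (hj : ¬∀ x ∈ π.part j, j ≤ x) :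
    ∃ p ∈ π.part j, IsLeast {a | IsOpenAt π a j} p := by
  push Not at hj
  obtain ⟨x, hx, hxj⟩ := hj
  have hne : ((π.part j).filter (· < j)).Nonempty := ⟨x, mem_filter.2 ⟨hx, hxj⟩⟩
  obtain ⟨hp, hpj⟩ := mem_filter.1 (max'_mem _ hne)
  exact ⟨_, hp, isLeast_isOpenAt hπ hp hpj fun y hy hyj ↦
    le_max' _ y (mem_filter.2 ⟨hy, hyj⟩)⟩

theorem isOpenAt_iff_card {a j : Fin n} : IsOpenAt π a j ↔
    a < j ∧ (∀ x ∈ (π.part a).filter (· < j), x ≤ a) ∧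
      #((π.part a).filter (· < j)) ≠ #(π.part a) := by
  simp only [IsOpenAt, ne_eq, card_filter_eq_iff, mem_filter, and_imp]

def AgreeBelow (π π' : Finpartition (univ : Finset (Fin n))) (j : Fin n) : Prop :=
  ∀ a b, a < j → b < j → (b ∈ π.part a ↔ b ∈ π'.part a)

theorem AgreeBelow.filter_part_lt_eq {j a : Fin n} (hagree : AgreeBelow π π' j) (ha : a < j) :
    (π.part a).filter (· < j) = (π'.part a).filter (· < j) := by
  ext x
  simp only [mem_filter, and_congr_left_iff]
  exact hagree a x ha

theorem AgreeBelow.card_part_eq {j a : Fin n} (hagree : AgreeBelow π π' j)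
    (hsize : π.cardAtMin = π'.cardAtMin) (ha : a < j) : #(π.part a) = #(π'.part a) := by
  have hne : (π.part a).Nonempty := ⟨a, π.mem_part (mem_univ a)⟩
  set m := (π.part a).min' hne
  have hmj : m < j := (min'_le _ a (π.mem_part (mem_univ a))).trans_lt ha
  have hpart' : π'.part m = π'.part a :=
    π'.part_eq_of_mem (π'.part_mem.2 (mem_univ a)) ((hagree a m ha hmj).1 (min'_mem _ _))
  have hcard : π'.cardAtMin m = #(π.part a) := by
    rw [← hsize]
    exact cardAtMin_min' (π.part_mem.2 (mem_univ a)) hne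
  have hmin' : ∀ x ∈ π'.part m, m ≤ x :=
    (cardAtMin_ne_zero_iff (mem_univ m)).1 (hcard ▸ card_ne_zero_of_mem (min'_mem _ hne))
  rw [← hcard, cardAtMin_of_forall_le hmin', hpart']

theorem AgreeBelow.isOpenAt_iff {j a : Fin n} (hagree : AgreeBelow π π' j)
    (hsize : π.cardAtMin = π'.cardAtMin) : IsOpenAt π a j ↔ IsOpenAt π' a j := by
  rw [isOpenAt_iff_card, isOpenAt_iff_card]
  refine and_congr_right fun ha ↦ ?_
  rw [hagree.filter_part_lt_eq ha, hagree.card_part_eq hsize ha]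

theorem AgreeBelow.mem_part_iff (hπ : IsNonnesting π) (hπ' : IsNonnesting π') {j a : Fin n}
    (hagree : AgreeBelow π π' j) (hsize : π.cardAtMin = π'.cardAtMin) (ha : a < j) :
    j ∈ π.part a ↔ j ∈ π'.part a := by
  have hmin_iff : (∀ x ∈ π.part j, j ≤ x) ↔ (∀ x ∈ π'.part j, j ≤ x) := by
    rw [← cardAtMin_ne_zero_iff (mem_univ j), ← cardAtMin_ne_zero_iff (mem_univ j), hsize]
  by_cases hmin : ∀ x ∈ π.part j, j ≤ x
  · exact iff_of_false (fun h ↦ (hmin a (π.mem_part_comm.1 h)).not_gt ha)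
      (fun h ↦ (hmin_iff.1 hmin a (π'.mem_part_comm.1 h)).not_gt ha)
  -- `j` has a predecessor in both partitions; nonnesting forces it to be the least open element,
  -- which is determined by the common partition below `j`.
  obtain ⟨p, hp, hleast⟩ := exists_isLeast_isOpenAt hπ hmin
  obtain ⟨p', hp', hleast'⟩ := exists_isLeast_isOpenAt hπ' (hmin_iff.not.1 hmin)
  have hopen : {x | IsOpenAt π x j} = {x | IsOpenAt π' x j} :=
    Set.ext fun x ↦ hagree.isOpenAt_iff hsize
  obtain rfl : p = p' := hleast.unique (hopen ▸ hleast')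
  rw [π.mem_part_comm, π'.mem_part_comm,
    ← π.part_eq_of_mem (π.part_mem.2 (mem_univ j)) hp,
    ← π'.part_eq_of_mem (π'.part_mem.2 (mem_univ j)) hp']
  exact hagree p a hleast.1.1 ha

end

end Finpartition

/-- A nonnesting partition of `[n]` is uniquely determined by the minima of its blocks
together with the sizes of the corresponding blocks: if `π` and `π'` are nonnesting
partitions such that for every `c` and every `s ≥ 1`, `π` has a block with minimum `c`
and cardinality `s` iff `π'` does, then `π = π'`. -/
theorem nonnesting_ext (n : ℕ) (π π' : Finpartition (Finset.univ : Finset (Fin n)))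
    (hπ : IsNonnesting π) (hπ' : IsNonnesting π')
    (h : ∀ c : Fin n, ∀ s : ℕ, 1 ≤ s →
      ((∃ B ∈ π.parts, B.card = s ∧ ∃ hB : B.Nonempty, B.min' hB = c) ↔
        (∃ B ∈ π'.parts, B.card = s ∧ ∃ hB : B.Nonempty, B.min' hB = c))) :
    π = π' := by
  have hsize : π.cardAtMin = π'.cardAtMin := Finpartition.cardAtMin_eq_of_iff h
  have hstep : ∀ j a : Fin n, a < j → (j ∈ π.part a ↔ j ∈ π'.part a) := by
    intro j
    induction j using WellFoundedLT.induction with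
    | _ j ih =>
      refine fun a ↦ Finpartition.AgreeBelow.mem_part_iff hπ hπ' (fun a b ha hb ↦ ?_) hsize
      exact Finpartition.mem_part_iff_of_forall_lt_max (ih _ (max_lt ha hb))
  exact Finpartition.eq_of_forall_part_eq fun a _ ↦
    Finset.ext fun b ↦ Finpartition.mem_part_iff_of_forall_lt_max (hstep _)
end
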